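/- (Interpolation operator 𝓘_{K_t}, Theorem 4.3) Let k ≥ 1 be an integer, a < b real numbers, and v : [a,b] → ℝ continuously differentiable. Then there exists a unique polynomial p of degree at most k such that p(a) = v(a), p(b) = v(b), and ∫_a^b (v′(s) − p′(s)) q(s) ds = 0 for every polynomial q of degree at most k−1 (i.e., p′ is the L²(a,b)-orthogonal projection of v′ onto ℙ_{k−1}). Moreover, this p satisfies the best-approximation property ∫_a^b (v′(s) − p′(s))² ds ≤ ∫_a^b (v′(s) − r′(s))² ds for every polynomial r of degree at most k. -/

import Mathlib

open MeasureTheory Set Polynomial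

/-! The derivative of the interpolant is forced to be the `L²(a, b)`-orthogonal projection `q` of
`v'` onto `ℙ_{k-1}`. It exists and is unique because `ℙ_{k-1}` is finite dimensional and the
`L²(a, b)` pairing is nondegenerate on polynomials (a nonzero polynomial has finitely many
roots). Take `p` to be the antiderivative of `q` with
`p(a) = v(a)`. Constants lie in `ℙ_{k-1}`, so testing against `1` gives
`∫ q = ∫ v' = v(b) - v(a)`, hence `p(b) = v(b)`. Best approximation is Pythagoras:
`v' - r' = (v' - q) + (q - r')` with `q - r' ∈ ℙ_{k-1}` orthogonal to `v' - q`. -/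

theorem intervalIntegral.integral_sq_le_integral_add_sq {a b : ℝ} {f h : ℝ → ℝ}
    (hab : a ≤ b) (hf : ContinuousOn f (Icc a b)) (hh : ContinuousOn h (Icc a b))
    (hfh : ∫ s in a..b, f s * h s = 0) :
    ∫ s in a..b, f s ^ 2 ≤ ∫ s in a..b, (f s + h s) ^ 2 := by
  have hi : ∀ u : ℝ → ℝ, ContinuousOn u (Icc a b) → IntervalIntegrable u volume a b :=
    fun u hu => hu.intervalIntegrable_of_Icc hab
  have hexpand : ∫ s in a..b, (f s + h s) ^ 2 =
      (∫ s in a..b, f s ^ 2) + 2 * (∫ s in a..b, f s * h s) + ∫ s in a..b, h s ^ 2 := by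
    rw [← intervalIntegral.integral_const_mul,
      ← intervalIntegral.integral_add (hi _ (by fun_prop)) (hi _ (by fun_prop)),
      ← intervalIntegral.integral_add (hi _ (by fun_prop)) (hi _ (by fun_prop))]
    congr 1 with s
    ring
  rw [hexpand, hfh, mul_zero, add_zero]
  exact le_add_of_nonneg_right (intervalIntegral.integral_nonneg hab fun s _ => sq_nonneg (h s))

theorem integral_derivWithin_Icc_of_contDiffOn {a b : ℝ} {v : ℝ → ℝ} (hab : a < b)
    (hv : ContDiffOn ℝ 1 v (Icc a b)) : ∫ s in a..b, derivWithin v (Icc a b) s = v b - v a := by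
  refine intervalIntegral.integral_eq_sub_of_hasDeriv_right_of_le hab.le hv.continuousOn
    (fun x hx => ?_) ?_
  · have hvx := (hv.differentiableOn one_ne_zero x (Ioo_subset_Icc_self hx)).hasDerivWithinAt
    exact (hvx.hasDerivAt (Icc_mem_nhds hx.1 hx.2)).hasDerivWithinAt
  · exact (hv.continuousOn_derivWithin (uniqueDiffOn_Icc hab) le_rfl).intervalIntegrable_of_Icc
      hab.le

namespace Polynomial

variable {K : Type*} [Field K]

noncomputable def antiderivative (q : K[X]) : K[X] :=
  q.sum fun n c => C (c / (n + 1)) * X ^ (n + 1)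

@[simp]
theorem derivative_antiderivative [CharZero K] (q : K[X]) : derivative (antiderivative q) = q := by
  conv_rhs => rw [← q.sum_C_mul_X_pow_eq]
  simp only [antiderivative, Polynomial.sum, map_sum, derivative_C_mul_X_pow,
    Nat.add_sub_cancel, Nat.cast_add, Nat.cast_one]
  refine Finset.sum_congr rfl fun n _ => ?_
  rw [div_mul_cancel₀ _ (Nat.cast_add_one_ne_zero n)]

theorem natDegree_antiderivative_le (q : K[X]) :
    (antiderivative q).natDegree ≤ q.natDegree + 1 := by
  refine natDegree_sum_le_of_forall_le _ _ fun n hn => ?_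
  exact (natDegree_C_mul_X_pow_le _ _).trans (Nat.succ_le_succ (le_natDegree_of_mem_supp n hn))

theorem eq_of_derivative_eq_of_eval_eq [CharZero K] {p q : K[X]} (x : K)
    (hd : derivative p = derivative q) (hx : p.eval x = q.eval x) : p = q := by
  have hC := eq_C_of_derivative_eq_zero
    (by rw [derivative_sub, hd, sub_self] : derivative (p - q) = 0)
  have h0 : (p - q).coeff 0 = 0 := by
    simpa [hx] using (congrArg (eval x) hC).symm
  rw [h0, C_0] at hC
  exact sub_eq_zero.mp hC

theorem exists_derivative_eq_eval_eq [CharZero K] (q : K[X]) (x c : K) :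
    ∃ p : K[X], p.natDegree ≤ q.natDegree + 1 ∧ derivative p = q ∧ p.eval x = c := by
  refine ⟨C (c - (antiderivative q).eval x) + antiderivative q, ?_, by simp, by simp⟩
  exact natDegree_C_add.trans_le (natDegree_antiderivative_le q)

instance (n : ℕ) : FiniteDimensional K (degreeLE K n) :=
  degreeLT_succ_eq_degreeLE (R := K) ▸ inferInstance

theorem eq_zero_of_integral_eval_sq_eq_zero {a b : ℝ} (hab : a < b) {q : ℝ[X]}
    (h : ∫ s in a..b, q.eval s ^ 2 = 0) : q = 0 := by
  by_contra hq
  obtain ⟨c, hc, hcq⟩ := (Icc_infinite hab).exists_notMem_finite (q.finite_setOfPred_isRoot hq)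
  have : 0 < ∫ s in a..b, q.eval s ^ 2 :=
    intervalIntegral.integral_pos hab (by fun_prop) (fun _ _ => sq_nonneg _)
      ⟨c, hc, by simpa [sq_pos_iff] using hcq⟩
  exact this.ne' h

theorem derivative_mem_degreeLE {R : Type*} [Semiring R] {r : R[X]} {n : ℕ}
    (hr : r.degree ≤ n) : derivative r ∈ degreeLE R ↑(n - 1) :=
  mem_degreeLE.2 <| natDegree_le_iff_degree_le.1 <|
    (natDegree_derivative_le r).trans (Nat.sub_le_sub_right (natDegree_le_of_degree_le hr) 1)

section L2Projection

variable {a b : ℝ} {g : ℝ → ℝ}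

noncomputable def intervalIntegralEval (a b : ℝ) : ℝ[X] →ₗ[ℝ] ℝ where
  toFun p := ∫ s in a..b, p.eval s
  map_add' p q := by
    simpa using intervalIntegral.integral_add (p.continuous.intervalIntegrable a b)
      (q.continuous.intervalIntegrable a b)
  map_smul' c p := by simp

noncomputable def l2Form (a b : ℝ) : LinearMap.BilinForm ℝ ℝ[X] :=
  (LinearMap.mul ℝ ℝ[X]).compr₂ (intervalIntegralEval a b)

theorem l2Form_apply (p q : ℝ[X]) : l2Form a b p q = ∫ s in a..b, p.eval s * q.eval s := by
  simp [l2Form, intervalIntegralEval]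

theorem l2Form_restrict_nondegenerate (hab : a < b) (V : Submodule ℝ ℝ[X]) :
    ((l2Form a b).restrict V).Nondegenerate := by
  have h : ∀ q : V, l2Form a b q q = 0 → q = 0 := fun q hq =>
    Subtype.ext <| eq_zero_of_integral_eval_sq_eq_zero hab <| by simpa [l2Form_apply, sq] using hq
  exact ⟨fun q hq => h q (hq q), fun q hq => h q (hq q)⟩

def IsL2Projection (a b : ℝ) (g : ℝ → ℝ) (V : Submodule ℝ ℝ[X]) (q : ℝ[X]) : Prop :=
  q ∈ V ∧ ∀ r ∈ V, ∫ s in a..b, (g s - q.eval s) * r.eval s = 0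

theorem exists_isL2Projection (hab : a < b) (hg : ContinuousOn g (Icc a b))
    (V : Submodule ℝ ℝ[X]) [FiniteDimensional ℝ V] : ∃ q, IsL2Projection a b g V q := by
  have hgr : ∀ r : ℝ[X], IntervalIntegrable (fun s => g s * r.eval s) volume a b := fun r =>
    (hg.mul r.continuous.continuousOn).intervalIntegrable_of_Icc hab.le
  let L : Module.Dual ℝ V :=
    { toFun r := ∫ s in a..b, g s * (r : ℝ[X]).eval s
      map_add' r r' := by
        simpa [mul_add] using intervalIntegral.integral_add (hgr r) (hgr r')
      map_smul' c r := by simp [mul_left_comm] }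
  -- Riesz representation of `L` with respect to the nondegenerate form on `V`
  obtain ⟨q, hq⟩ : ∃ q : V, ∀ r : V, (l2Form a b).restrict V q r = L r :=
    ⟨_, LinearMap.BilinForm.apply_toDual_symm_apply
      (hB := l2Form_restrict_nondegenerate hab V) L⟩
  refine ⟨q, q.2, fun r hr => ?_⟩
  have hqr : ∫ s in a..b, (q : ℝ[X]).eval s * r.eval s = ∫ s in a..b, g s * r.eval s := by
    simpa [l2Form_apply, L] using hq ⟨r, hr⟩
  simp only [sub_mul]
  have hqr_int : IntervalIntegrable (fun s => (q : ℝ[X]).eval s * r.eval s) volume a b :=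
    (by fun_prop : Continuous fun s => (q : ℝ[X]).eval s * r.eval s).intervalIntegrable a b
  rw [intervalIntegral.integral_sub (hgr r) hqr_int, hqr, sub_self]

end L2Projection

namespace IsL2Projection

variable {a b : ℝ} {g : ℝ → ℝ} {V : Submodule ℝ ℝ[X]} {q : ℝ[X]}

theorem integral_eval_eq (hab : a ≤ b) (hg : ContinuousOn g (Icc a b))
    (hq : IsL2Projection a b g V q) (h1 : 1 ∈ V) :
    ∫ s in a..b, q.eval s = ∫ s in a..b, g s := by
  have h := hq.2 1 h1
  simp only [eval_one, mul_one] at h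
  rwa [intervalIntegral.integral_sub (hg.intervalIntegrable_of_Icc hab)
    (q.continuous.intervalIntegrable a b), sub_eq_zero, eq_comm] at h

theorem integral_sq_le (hab : a ≤ b) (hg : ContinuousOn g (Icc a b))
    (hq : IsL2Projection a b g V q) {r : ℝ[X]} (hr : r ∈ V) :
    ∫ s in a..b, (g s - q.eval s) ^ 2 ≤ ∫ s in a..b, (g s - r.eval s) ^ 2 := by
  simpa [eval_sub] using intervalIntegral.integral_sq_le_integral_add_sq hab
    (f := fun s => g s - q.eval s) (h := fun s => (q - r).eval s) (by fun_prop) (by fun_prop)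
    (hq.2 _ (V.sub_mem hq.1 hr))

theorem unique (hab : a < b) (hg : ContinuousOn g (Icc a b)) {q' : ℝ[X]}
    (hq : IsL2Projection a b g V q) (hq' : IsL2Projection a b g V q') : q = q' := by
  rw [← sub_eq_zero]
  refine eq_zero_of_integral_eval_sq_eq_zero hab ?_
  have hi : ∀ p : ℝ[X], IntervalIntegrable (fun s => (g s - p.eval s) * (q - q').eval s)
      volume a b := fun p => ContinuousOn.intervalIntegrable_of_Icc hab.le (by fun_prop)
  calc ∫ s in a..b, (q - q').eval s ^ 2
      = ∫ s in a..b,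
          ((g s - q'.eval s) * (q - q').eval s - (g s - q.eval s) * (q - q').eval s) := by
        congr 1 with s
        simp only [eval_sub]
        ring
    _ = 0 := by
      rw [intervalIntegral.integral_sub (hi q') (hi q), hq.2 _ (V.sub_mem hq.1 hq'.1),
        hq'.2 _ (V.sub_mem hq.1 hq'.1), sub_zero]

end IsL2Projection

end Polynomial

/-- Interpolation operator `𝓘_{K_t}` (Theorem 4.3): for `C¹` functions `v` on `[a,b]` there is
a unique polynomial `p` of degree `≤ k` with `p(a) = v(a)`, `p(b) = v(b)` whose derivative is
the `L²(a,b)`-orthogonal projection of `v'` onto `ℙ_{k−1}`; moreover `p'` is the best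
`L²(a,b)`-approximation of `v'` among derivatives of polynomials of degree `≤ k`. -/
theorem interpolation_in_time (k : ℕ) (hk : 1 ≤ k) (a b : ℝ) (hab : a < b)
    (v : ℝ → ℝ) (hv : ContDiffOn ℝ 1 v (Set.Icc a b)) :
    ∃ p : Polynomial ℝ,
      (p.degree ≤ (k : ℕ) ∧ p.eval a = v a ∧ p.eval b = v b ∧
        ∀ q : Polynomial ℝ, q.degree ≤ (k - 1 : ℕ) →
          ∫ s in a..b,
            (derivWithin v (Set.Icc a b) s - p.derivative.eval s) * q.eval s = 0) ∧
      (∀ r : Polynomial ℝ, r.degree ≤ (k : ℕ) →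
          (∫ s in a..b, (derivWithin v (Set.Icc a b) s - p.derivative.eval s) ^ 2) ≤
            ∫ s in a..b, (derivWithin v (Set.Icc a b) s - r.derivative.eval s) ^ 2) ∧
      (∀ p' : Polynomial ℝ,
        (p'.degree ≤ (k : ℕ) ∧ p'.eval a = v a ∧ p'.eval b = v b ∧
          ∀ q : Polynomial ℝ, q.degree ≤ (k - 1 : ℕ) →
            ∫ s in a..b,
              (derivWithin v (Set.Icc a b) s - p'.derivative.eval s) * q.eval s = 0) →
        p' = p) := by
  set g := derivWithin v (Icc a b)
  have hg : ContinuousOn g (Icc a b) := hv.continuousOn_derivWithin (uniqueDiffOn_Icc hab) le_rfl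
  obtain ⟨q, hq⟩ : ∃ q, IsL2Projection a b g (degreeLE ℝ ↑(k - 1)) q :=
    exists_isL2Projection hab hg _
  obtain ⟨p, hp_natDegree, rfl, hpa⟩ := exists_derivative_eq_eval_eq q a (v a)
  have hpdeg : p.degree ≤ k := by
    have := natDegree_le_of_degree_le (mem_degreeLE.1 hq.1)
    exact degree_le_of_natDegree_le (by omega)
  have hone : (1 : ℝ[X]) ∈ degreeLE ℝ ↑(k - 1) :=
    mem_degreeLE.2 (degree_one_le.trans (WithBot.coe_le_coe.2 (Nat.zero_le _)))
  have hpb : p.eval b = v b := by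
    have hFTC := intervalIntegral.integral_eq_sub_of_hasDerivAt (fun x _ => p.hasDerivAt x)
      (p.derivative.continuous.intervalIntegrable a b)
    rw [hq.integral_eval_eq hab.le hg hone,
      integral_derivWithin_Icc_of_contDiffOn hab hv, hpa] at hFTC
    linarith
  refine ⟨p, ⟨hpdeg, hpa, hpb, fun r hr => hq.2 r (mem_degreeLE.2 hr)⟩,
    fun r hr => hq.integral_sq_le hab.le hg (derivative_mem_degreeLE hr), ?_⟩
  rintro p' ⟨hp'deg, hp'a, -, hp'orth⟩
  have hq' : IsL2Projection a b g (degreeLE ℝ ↑(k - 1)) (derivative p') :=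
    ⟨derivative_mem_degreeLE hp'deg, fun r hr => hp'orth r (mem_degreeLE.1 hr)⟩
  exact eq_of_derivative_eq_of_eval_eq a (hq'.unique hab hg hq) (hp'a.trans hpa.symm)
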